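/- For every bi-infinite sequence (x_n) of positive real numbers such that for all n, x_{n+1} = 2·x_n or x_{n+1} = x_n/3, the sequence is not periodic: there is no k > 0 with x_{n+k} = x_n for all n. -/

import Mathlib

/-! A period `k > 0` would give `x k = 2 ^ a / 3 ^ b * x 0 = x 0` with `a + b = k`, hence
`2 ^ a = 3 ^ b`; since `2` and `3` are coprime this forces `a = b = 0`. -/

theorem Nat.Coprime.eq_zero_of_pow_eq_pow {p q a b : ℕ} (hpq : p.Coprime q) (hp : 1 < p)
    (hq : 1 < q) (h : p ^ a = q ^ b) : a = 0 ∧ b = 0 := by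
  have hpa : p ^ a = 1 := (Nat.coprime_self _).mp (h ▸ hpq.pow a b)
  have hqb : q ^ b = 1 := h ▸ hpa
  exact ⟨(Nat.pow_eq_one.mp hpa).resolve_left hp.ne', (Nat.pow_eq_one.mp hqb).resolve_left hq.ne'⟩

theorem exists_pow_div_pow_mul_of_step {K : Type*} [Field K] {p q : K} {x : ℤ → K}
    (hstep : ∀ n, x (n + 1) = p * x n ∨ x (n + 1) = x n / q) (n : ℤ) (m : ℕ) :
    ∃ a b : ℕ, a + b = m ∧ x (n + m) = p ^ a / q ^ b * x n := by
  induction m with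
  | zero => exact ⟨0, 0, rfl, by simp⟩
  | succ m ih =>
    obtain ⟨a, b, hab, hx⟩ := ih
    have hshift : n + ((m + 1 : ℕ) : ℤ) = n + m + 1 := by push_cast; ring
    rw [hshift]
    rcases hstep (n + m) with h | h
    · exact ⟨a + 1, b, by omega, by rw [h, hx]; ring⟩
    · exact ⟨a, b + 1, by omega, by rw [h, hx]; ring⟩

theorem kari_sequence_aperiodic (x : ℤ → ℝ)
    (hpos : ∀ n, 0 < x n)
    (hstep : ∀ n, x (n + 1) = 2 * x n ∨ x (n + 1) = x n / 3) :
    ¬ ∃ k : ℤ, 0 < k ∧ ∀ n, x (n + k) = x n := by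
  rintro ⟨k, hk, hper⟩
  obtain ⟨a, b, hab, hxk⟩ := exists_pow_div_pow_mul_of_step hstep 0 k.toNat
  rw [zero_add, Int.toNat_of_nonneg hk.le] at hxk
  have hratio : (2 : ℝ) ^ a / 3 ^ b = 1 := by
    have hper0 : x k = x 0 := by simpa using hper 0
    exact (mul_eq_right₀ (hpos 0).ne').mp (hxk.symm.trans hper0)
  have hpow : (2 : ℕ) ^ a = 3 ^ b := by
    rw [div_eq_one_iff_eq (by positivity)] at hratio
    exact_mod_cast hratio
  obtain ⟨rfl, rfl⟩ :=
    Nat.Coprime.eq_zero_of_pow_eq_pow (by norm_num) (by norm_num) (by norm_num) hpow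
  omega
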